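/- Let h : ℝ^n → (−∞,+∞] be a proper closed convex function that is K_h-Lipschitz continuous on its domain H := dom h, where H is compact. Then for every u, z ∈ H, every δ > 0, and every ξ ∈ ∂_δ h(z), one has ‖ξ‖·dist(u, ∂H) ≤ [dist(u, ∂H) + ‖z − u‖]·K_h + ⟨ξ, z − u⟩ + δ, where ∂H denotes the topological boundary of H. -/
import Mathlib

open RealInnerProductSpace

/-- The δ-subdifferential at `z` of a proper extended-real-valued function represented by
its effective domain `H` and its real values `h` on `H` (the function equals `+∞` off `H`). -/
def epsSubdiff {E : Type*} [NormedAddCommGroup E] [InnerProductSpace ℝ E]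
    (H : Set E) (h : E → ℝ) (ε : ℝ) (z : E) : Set E :=
  {u | ∀ z' ∈ H, h z + ⟪u, z' - z⟫ - ε ≤ h z'}

/-- bound on approximate subgradients of a Lipschitz convex function with
compact domain.  The proper closed convex function `h : ℝⁿ → (−∞,∞]` is represented by its
effective domain `H` and its real values `h` on `H`; closedness of the extended function is
automatic since `h` is Lipschitz continuous on the compact (hence closed) set `H`. -/
theorem subgradient_bound_via_boundary
    {E : Type*} [NormedAddCommGroup E] [InnerProductSpace ℝ E] [FiniteDimensional ℝ E]
    (H : Set E) (h : E → ℝ) (Kh : ℝ) (hKh : 0 < Kh)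
    (hHne : H.Nonempty) (hHcpt : IsCompact H) (hHcvx : Convex ℝ H)
    (hhcvx : ConvexOn ℝ H h)
    (hhlip : ∀ x ∈ H, ∀ y ∈ H, |h x - h y| ≤ Kh * ‖x - y‖) :
    ∀ u ∈ H, ∀ z ∈ H, ∀ δ : ℝ, 0 < δ → ∀ ξ ∈ epsSubdiff H h δ z,
      ‖ξ‖ * Metric.infDist u (frontier H) ≤
        (Metric.infDist u (frontier H) + ‖z - u‖) * Kh + ⟪ξ, z - u⟫ + δ := by
  intro u hu z hz δ hδ ξ hξ
  set r := Metric.infDist u (frontier H) with hr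
  have hr0 : 0 ≤ r := Metric.infDist_nonneg
  -- base inequality from taking z' = u
  have hbase : 0 ≤ Kh * ‖z - u‖ + ⟪ξ, z - u⟫ + δ := by
    have h1 := hξ u hu
    have h2 : |h u - h z| ≤ Kh * ‖u - z‖ := hhlip u hu z hz
    have h4 : ⟪ξ, u - z⟫ = -⟪ξ, z - u⟫ := by rw [← neg_sub, inner_neg_right]
    have h5 : ‖u - z‖ = ‖z - u‖ := norm_sub_rev _ _
    have h6 : h u - h z ≤ Kh * ‖z - u‖ := by
      rw [← h5]; exact (abs_le.mp h2).2
    rw [h4] at h1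
    linarith
  rcases eq_or_lt_of_le hr0 with hr0' | hrpos
  · rw [← hr0', mul_zero]
    nlinarith [norm_nonneg (z - u)]
  rcases eq_or_ne ξ 0 with rfl | hξ0
  · simp only [norm_zero, zero_mul]
    nlinarith [norm_nonneg (z - u)]
  -- main case : r > 0 and ξ ≠ 0
  have hnξ : (0:ℝ) < ‖ξ‖ := norm_pos_iff.mpr hξ0
  -- the ball of radius r around u is inside interior H
  have hufr : u ∉ frontier H := by
    intro hmem
    have : r ≤ 0 := by
      rw [hr]
      have := Metric.infDist_le_dist_of_mem (x := u) hmem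
      simpa using this
    linarith
  have huint : u ∈ interior H := by
    have hcl : u ∈ closure H := subset_closure hu
    rcases (compl_frontier_eq_union_interior (s := H) ▸ hufr : u ∈ interior H ∪ interior Hᶜ)
      with h' | h'
    · exact h'
    · exact absurd hu (interior_subset h')
  have hball : Metric.ball u r ⊆ interior H := by
    refine IsPreconnected.subset_left_of_subset_union (isOpen_interior (s := H)) (isOpen_interior (s := Hᶜ))
      ?_ ?_ ⟨u, Metric.mem_ball_self hrpos, huint⟩ (convex_ball u r).isPreconnected
    · exact (disjoint_compl_right).mono interior_subset interior_subset
    · rw [← compl_frontier_eq_union_interior]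
      exact Metric.ball_infDist_subset_compl
  have hcball : Metric.closedBall u r ⊆ H := by
    rw [← closure_ball u (ne_of_gt hrpos)]
    calc closure (Metric.ball u r) ⊆ closure H := closure_mono (hball.trans interior_subset)
    _ = H := hHcpt.isClosed.closure_eq
  -- the test point
  set v : E := (r * ‖ξ‖⁻¹) • ξ with hv
  have hnv : ‖v‖ = r := by
    rw [hv, norm_smul, Real.norm_eq_abs, abs_of_nonneg (by positivity)]
    field_simp
  have hmem : u + v ∈ H := by
    apply hcball
    rw [Metric.mem_closedBall, dist_eq_norm]
    simp [hnv]
  have h1 := hξ (u + v) hmem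
  have h2 : |h (u + v) - h z| ≤ Kh * ‖(u + v) - z‖ := hhlip (u + v) hmem z hz
  have h3 : ‖(u + v) - z‖ ≤ r + ‖z - u‖ := by
    have : (u + v) - z = v - (z - u) := by abel
    rw [this]
    calc ‖v - (z - u)‖ ≤ ‖v‖ + ‖z - u‖ := norm_sub_le _ _
    _ = r + ‖z - u‖ := by rw [hnv]
  have h4 : ⟪ξ, (u + v) - z⟫ = ‖ξ‖ * r - ⟪ξ, z - u⟫ := by
    have he : (u + v) - z = v - (z - u) := by abel
    rw [he, inner_sub_right, hv, real_inner_smul_right, real_inner_self_eq_norm_sq]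
    field_simp
  have h5 : Kh * ‖(u + v) - z‖ ≤ Kh * (r + ‖z - u‖) :=
    mul_le_mul_of_nonneg_left h3 hKh.le
  have h6 : h (u + v) - h z ≤ Kh * (r + ‖z - u‖) := le_trans (abs_le.mp h2).2 h5
  rw [h4] at h1
  nlinarith
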